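/- arXiv:0810.4017 — 2 statements merged into one kernel-verified Lean document; each statement's English description precedes it below -/
import Mathlib

section
/- Let A ⊆ ℕ be a set, and σ(A,n) = Σ_{d | n, d ∈ A} d. Writing n = 2^k·m with m odd, and S_A(m,k) = Σ_{i=0}^{k} 2^i·χ(A, 2^i m) where χ(A,·) is the characteristic function of A, one has m·S_A(m,k) = Σ_{d | m̄} μ(d)·σ(A, n/d), where m̄ is the radical of m (the product of the distinct primes dividing m, with 1̄ = 1). -/
open Finset ArithmeticFunction

/-- `σ(A,n)`: the sum of the divisors of `n` belonging to `A`. -/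
def sigmaA (A : Set ℕ) [DecidablePred (· ∈ A)] (n : ℕ) : ℤ :=
  ∑ d ∈ n.divisors, if d ∈ A then (d : ℤ) else 0

/-- The radical of `m`: the product of its distinct prime factors. -/
def rad (m : ℕ) : ℕ := ∏ p ∈ m.primeFactors, p

lemma rad_dvd (m : ℕ) : rad m ∣ m := Nat.prod_primeFactors_dvd m

lemma sum_moeb (n : ℕ) : ∑ d ∈ n.divisors, (moebius d : ℤ) = if n = 1 then 1 else 0 := by
  rw [← coe_mul_zeta_apply, moebius_mul_coe_zeta, one_apply]

lemma innerMoebSum (m f : ℕ) (hm : 0 < m) (hf : f ∣ m) :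
    (∑ d ∈ (rad m).divisors, if f ∣ m / d then (moebius d : ℤ) else 0)
      = if f = m then 1 else 0 := by
  have hrad0 : rad m ≠ 0 := fun h =>
    hm.ne' (Nat.eq_zero_of_zero_dvd (h ▸ rad_dvd m))
  have hfpos : 0 < f := Nat.pos_of_dvd_of_pos hf hm
  have hmf : 0 < m / f := Nat.div_pos (Nat.le_of_dvd hm hf) hfpos
  have key : ∀ d ∈ (rad m).divisors, (if f ∣ m / d then (moebius d : ℤ) else 0)
      = if d ∣ m / f then (moebius d : ℤ) else 0 := by
    intro d hd
    have hdm : d ∣ m := (Nat.mem_divisors.mp hd).1.trans (rad_dvd m)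
    have h1 : f ∣ m / d ↔ d * f ∣ m := Nat.dvd_div_iff_mul_dvd hdm
    have h2 : d ∣ m / f ↔ f * d ∣ m := Nat.dvd_div_iff_mul_dvd hf
    have h3 : (f ∣ m / d) ↔ (d ∣ m / f) := by rw [h1, h2, mul_comm]
    exact if_congr h3 rfl rfl
  rw [Finset.sum_congr rfl key, ← Finset.sum_filter]
  have hfil : (rad m).divisors.filter (· ∣ m / f) = (Nat.gcd (rad m) (m / f)).divisors := by
    ext e
    have hg0 : Nat.gcd (rad m) (m / f) ≠ 0 := fun h => hrad0 (Nat.eq_zero_of_gcd_eq_zero_left h)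
    simp only [Finset.mem_filter, Nat.mem_divisors, Nat.dvd_gcd_iff, hg0, hrad0]
    tauto
  rw [hfil, sum_moeb]
  congr 1
  rw [eq_iff_iff]
  constructor
  · intro hgcd
    by_contra hne
    have h1 : m / f ≠ 1 := fun h => hne (Nat.eq_of_dvd_of_div_eq_one hf h)
    obtain ⟨p, hp, hpd⟩ := Nat.exists_prime_and_dvd h1
    have hpm : p ∣ m := hpd.trans (Nat.div_dvd_of_dvd hf)
    have hprad : p ∣ rad m :=
      Finset.dvd_prod_of_mem _ (Nat.mem_primeFactors.mpr ⟨hp, hpm, hm.ne'⟩)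
    have : p ∣ 1 := hgcd ▸ Nat.dvd_gcd hprad hpd
    exact hp.ne_one (Nat.eq_one_of_dvd_one this)
  · rintro rfl
    rw [Nat.div_self hm, Nat.gcd_one_right]

lemma core_moeb (m : ℕ) (hm : 0 < m) (g : ℕ → ℤ) :
    ∑ d ∈ (rad m).divisors, (moebius d : ℤ) * ∑ f ∈ (m / d).divisors, g f = g m := by
  have step1 : ∀ d ∈ (rad m).divisors,
      (moebius d : ℤ) * ∑ f ∈ (m / d).divisors, g f
        = ∑ f ∈ m.divisors, if f ∣ m / d then (moebius d : ℤ) * g f else 0 := by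
    intro d hd
    have hdm : d ∣ m := (Nat.mem_divisors.mp hd).1.trans (rad_dvd m)
    have hmd : 0 < m / d := Nat.div_pos (Nat.le_of_dvd hm hdm) (Nat.pos_of_dvd_of_pos hdm hm)
    have hset : (m / d).divisors = m.divisors.filter (· ∣ m / d) := by
      ext e
      simp only [Nat.mem_divisors, Finset.mem_filter]
      constructor
      · exact fun ⟨h1, _⟩ => ⟨⟨h1.trans (Nat.div_dvd_of_dvd hdm), hm.ne'⟩, h1⟩
      · exact fun ⟨_, h2⟩ => ⟨h2, hmd.ne'⟩
    rw [hset, Finset.sum_filter, Finset.mul_sum]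
    exact Finset.sum_congr rfl fun f _ => by split <;> simp
  rw [Finset.sum_congr rfl step1, Finset.sum_comm]
  have step2 : ∀ f ∈ m.divisors,
      (∑ d ∈ (rad m).divisors, if f ∣ m / d then (moebius d : ℤ) * g f else 0)
        = (if f = m then 1 else 0) * g f := by
    intro f hf
    rw [← innerMoebSum m f hm (Nat.mem_divisors.mp hf).1, Finset.sum_mul]
    exact Finset.sum_congr rfl fun d _ => by split <;> simp
  rw [Finset.sum_congr rfl step2]
  simp [Finset.sum_ite_eq' m.divisors m, Nat.mem_divisors.mpr ⟨dvd_rfl, hm.ne'⟩]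

lemma sigmaA_decomp (A : Set ℕ) [DecidablePred (· ∈ A)] (k m' : ℕ) (hm' : Odd m') :
    sigmaA A (2 ^ k * m') =
      ∑ f ∈ m'.divisors, ∑ i ∈ Finset.range (k + 1),
        (if 2 ^ i * f ∈ A then ((2 ^ i * f : ℕ) : ℤ) else 0) := by
  have hm'0 : m' ≠ 0 := by rintro rfl; simp [Nat.odd_iff] at hm'
  have h2m' : ¬ (2 ∣ m') := by
    rw [Nat.odd_iff] at hm'; omega
  rw [sigmaA, ← Finset.sum_product']
  refine Finset.sum_nbij' (fun e => (ordCompl[2] e, e.factorization 2))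
    (fun p => 2 ^ p.2 * p.1) ?_ ?_ ?_ ?_ ?_
  · intro e he
    obtain ⟨hed, hne⟩ := Nat.mem_divisors.mp he
    have he0 : e ≠ 0 := by rintro rfl; exact hne (Nat.eq_zero_of_zero_dvd hed)
    have hcop : Nat.Coprime (ordCompl[2] e) (2 ^ k) :=
      ((Nat.coprime_ordCompl Nat.prime_two he0).symm).pow_right k
    have hdvd1 : ordCompl[2] e ∣ 2 ^ k * m' := (Nat.ordCompl_dvd e 2).trans hed
    have hdvd : ordCompl[2] e ∣ m' := by
      exact hcop.dvd_of_dvd_mul_left hdvd1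
    have hle : e.factorization 2 ≤ k := by
      have h := (Nat.factorization_le_iff_dvd he0 hne).mpr hed 2
      rwa [Nat.factorization_mul (by positivity) hm'0, Finsupp.add_apply,
        Nat.Prime.factorization_pow Nat.prime_two,
        Finsupp.single_eq_same, Nat.factorization_eq_zero_of_not_dvd h2m', add_zero] at h
    simp only [Finset.mem_product, Nat.mem_divisors, Finset.mem_range]
    exact ⟨⟨hdvd, hm'0⟩, Nat.lt_succ_of_le hle⟩
  · rintro ⟨f, i⟩ hp
    simp only [Finset.mem_product, Nat.mem_divisors, Finset.mem_range] at hp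
    obtain ⟨⟨hfd, -⟩, hik⟩ := hp
    refine Nat.mem_divisors.mpr ⟨mul_dvd_mul (pow_dvd_pow 2 (Nat.lt_succ_iff.mp hik)) hfd, ?_⟩
    positivity
  · intro e he
    exact Nat.ordProj_mul_ordCompl_eq_self e 2
  · rintro ⟨f, i⟩ hp
    simp only [Finset.mem_product, Nat.mem_divisors, Finset.mem_range] at hp
    obtain ⟨⟨hfd, -⟩, -⟩ := hp
    have hf0 : f ≠ 0 := fun h => hm'0 (Nat.eq_zero_of_zero_dvd (h ▸ hfd))
    have h2f : ¬ (2 ∣ f) := fun h => h2m' (h.trans hfd)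
    have hv : (2 ^ i * f).factorization 2 = i := by
      rw [Nat.factorization_mul (by positivity) hf0, Finsupp.add_apply,
        Nat.Prime.factorization_pow Nat.prime_two, Finsupp.single_eq_same,
        Nat.factorization_eq_zero_of_not_dvd h2f, add_zero]
    simp only [hv]
    rw [Nat.mul_div_cancel_left _ (by positivity : (0:ℕ) < 2 ^ i)]
  · intro e he
    have h := Nat.ordProj_mul_ordCompl_eq_self e 2
    rw [h]

theorem moebius_inversion_SA (A : Set ℕ) [DecidablePred (· ∈ A)] (k m : ℕ) (hm : Odd m) :
    (m : ℤ) * ∑ i ∈ Finset.range (k + 1), 2 ^ i * (if 2 ^ i * m ∈ A then 1 else 0) =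
      ∑ d ∈ (rad m).divisors, (moebius d : ℤ) * sigmaA A (2 ^ k * m / d) := by
  have hm0 : 0 < m := hm.pos
  set G : ℕ → ℤ := fun f => ∑ i ∈ Finset.range (k + 1),
    (if 2 ^ i * f ∈ A then ((2 ^ i * f : ℕ) : ℤ) else 0) with hG
  have hR : ∀ d ∈ (rad m).divisors, (moebius d : ℤ) * sigmaA A (2 ^ k * m / d)
      = (moebius d : ℤ) * ∑ f ∈ (m / d).divisors, G f := by
    intro d hd
    have hdm : d ∣ m := (Nat.mem_divisors.mp hd).1.trans (rad_dvd m)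
    have h1 : 2 ^ k * m / d = 2 ^ k * (m / d) := Nat.mul_div_assoc _ hdm
    have hodd : Odd (m / d) := by
      rcases Nat.even_or_odd (m / d) with h | h
      · exact absurd (((even_iff_two_dvd.mp h).trans (Nat.div_dvd_of_dvd hdm)))
          (by rw [Nat.odd_iff] at hm; omega)
      · exact h
    rw [h1, sigmaA_decomp A k (m / d) hodd]
  rw [Finset.sum_congr rfl hR, core_moeb m hm0 G, hG]
  rw [Finset.mul_sum]
  refine Finset.sum_congr rfl fun i _ => ?_
  split <;> push_cast <;> ring
end

section
/- Let T(m,j) = Σ_{d | m̄, ℓ(d) ≡ j (mod 6)} μ(d) where m̄ is the radical of a squarefree-supported odd m coprime to 31 with no prime factor p satisfying ℓ(p)=0, ω_i the number of prime factors of m with ℓ(p)=i, and ℓ completely additive with values in ℤ/6ℤ determined by the orbit of p under multiplication by 2 mod 31. Then T(m,j) = (2^{ω₃}/3)·√3^{ω₂+ω₄}·cos((π/6)(2ω₅−2ω₁+ω₄−ω₂−2j)) + 0^{ω₃}·(√3^ω/3)·cos((π/6)(ω₂+ω₅−ω₁−ω₄−4j)) + 0^{ω₂+ω₄}·((−1)^j/6)·2^ω,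 where ω = ω₁+ω₂+ω₃+ω₄+ω₅ and 0^0 = 1, 0^t = 0 for t > 0. -/
open Finset ArithmeticFunction Real

/-- `ω_i(m)`: the number of distinct prime factors `p` of `m` with `ℓ(p) = i`. -/
def omegaL (ℓ : ℕ → ZMod 6) (m : ℕ) (i : ℕ) : ℕ :=
  (m.primeFactors.filter fun p => ℓ p = (i : ZMod 6)).card

/-! By additivity of `ℓ` and `μ (∏ p ∈ S, p) = (-1) ^ #S`, `T` is the signed count of the sets `S`
of prime factors of `m` with `∑ p ∈ S, ℓ p = j`. Detecting this congruence with the additive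
character `ψ k = ζ ^ k` of `ZMod 6`, `ζ = exp (π i / 3)`, factors the count:
`6 T = ∑ t, ζ ^ (-t j) ∏ p, (1 - ζ ^ (t ℓ p)) = ∑ t, ζ ^ (-t j) ∏ i, (1 - ζ ^ (t i)) ^ ω_i`.
The term `t = 0` vanishes because `m` has a prime factor and none has `ℓ p = 0`, the terms `t` and
`-t` are complex conjugate, and `1 - ζ ^ k = 2 sin (π k / 6) exp (π i (k - 3) / 6)` turns `t = ±1`,
`t = ±2` and `t = 3` into the three summands of the formula. -/

namespace Nat

lemma squarefree_prod_primes {P : Finset ℕ} (hP : ∀ p ∈ P, p.Prime) : Squarefree (∏ p ∈ P, p) :=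
  Finset.squarefree_prod_of_pairwise_isCoprime
    (fun p hp q hq hpq => Nat.coprime_iff_isRelPrime.mp <|
      (Nat.coprime_primes (hP p hp) (hP q hq)).mpr hpq)
    fun p hp => (hP p hp).squarefree

lemma sum_divisors_prod_primes {M : Type*} [AddCommMonoid M] {P : Finset ℕ}
    (hP : ∀ p ∈ P, p.Prime) (f : ℕ → M) :
    ∑ d ∈ (∏ p ∈ P, p).divisors, f d = ∑ S ∈ P.powerset, f (∏ p ∈ S, p) := by
  have hsq := squarefree_prod_primes hP
  rw [← divisors_filter_squarefree_of_squarefree hsq, sum_divisors_filter_squarefree hsq.ne_zero,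
    factors_eq, List.toFinset_coe, toFinset_factors, primeFactors_prod hP]
  simp only [prod_val, id]

end Nat

lemma ArithmeticFunction.moebius_prod_primes {S : Finset ℕ} (hS : ∀ p ∈ S, p.Prime) :
    moebius (∏ p ∈ S, p) = (-1) ^ #S := by
  rw [isMultiplicative_moebius.map_prod_of_prime S hS,
    prod_congr rfl fun p hp => moebius_apply_prime (hS p hp), prod_const]

lemma map_prod_eq_sum_of_not_dvd {G ι : Type*} [AddCommGroup G] {ℓ : ℕ → G} {q : ℕ}
    (hq : q.Prime) (hadd : ∀ a b : ℕ, ¬ q ∣ a → ¬ q ∣ b → ℓ (a * b) = ℓ a + ℓ b)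
    {S : Finset ι} {a : ι → ℕ} (hS : ∀ i ∈ S, ¬ q ∣ a i) :
    ℓ (∏ i ∈ S, a i) = ∑ i ∈ S, ℓ (a i) := by
  induction S using Finset.cons_induction with
  | empty => simpa using hadd 1 1 hq.not_dvd_one hq.not_dvd_one
  | cons i S hi ih =>
    have hS' : ∀ k ∈ S, ¬ q ∣ a k := fun k hk => hS k (mem_cons_of_mem hk)
    have hprod : ¬ q ∣ ∏ k ∈ S, a k := fun h =>
      let ⟨k, hk, hqk⟩ := hq.prime.dvd_finsetProd_iff _ |>.mp h
      hS' k hk hqk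
    rw [prod_cons, sum_cons, hadd _ _ (hS i (mem_cons_self i S)) hprod, ih hS']

lemma AddChar.map_sum_eq_prod {A M ι : Type*} [AddCommMonoid A] [CommMonoid M]
    (ψ : AddChar A M) (S : Finset ι) (f : ι → A) : ψ (∑ i ∈ S, f i) = ∏ i ∈ S, ψ (f i) := by
  induction S using Finset.cons_induction with
  | empty => simp
  | cons i S hi ih => rw [sum_cons, prod_cons, AddChar.map_add_eq_mul, ih]

lemma card_mul_sum_powerset_filter_sum_eq {R ι : Type*} [CommRing R] [Fintype R] [DecidableEq R]
    {ψ : AddChar R ℂ} (hψ : ψ.IsPrimitive) (P : Finset ι) (c : ι → R) (x : R) :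
    (Fintype.card R : ℂ) * ∑ S ∈ P.powerset with ∑ i ∈ S, c i = x, (-1 : ℂ) ^ #S =
      ∑ t, ψ (-(t * x)) * ∏ i ∈ P, (1 - ψ (t * c i)) := by
  classical
  have hprod (t : R) : ∏ i ∈ P, (1 - ψ (t * c i)) =
      ∑ S ∈ P.powerset, (-1 : ℂ) ^ #S * ψ (t * ∑ i ∈ S, c i) := by
    simp only [prod_sub, prod_const_one, mul_one, mul_sum, ψ.map_sum_eq_prod]
  simp only [hprod, mul_sum, sum_filter]
  rw [sum_comm]
  refine sum_congr rfl fun S _ => ?_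
  have horth := AddChar.sum_mulShift (∑ i ∈ S, c i - x) hψ
  simp only [sub_eq_zero] at horth
  calc _ = (-1 : ℂ) ^ #S * ∑ t, ψ (t * (∑ i ∈ S, c i - x)) := by
        rw [horth]; split_ifs <;> simp [mul_comm]
    _ = _ := by
        rw [mul_sum]
        refine sum_congr rfl fun t _ => ?_
        rw [mul_sub, sub_eq_add_neg, AddChar.map_add_eq_mul, ← mul_sum]
        ring

section

open Complex ComplexConjugate

local notation "ψ" => (ZMod.stdAddChar : AddChar (ZMod 6) ℂ)

lemma stdAddChar_six_intCast (k : ℤ) : ψ k = exp (↑(π * k / 3) * I) := by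
  rw [ZMod.stdAddChar_coe]
  push_cast
  ring_nf

lemma one_sub_exp_mul_I (θ : ℝ) :
    1 - exp (θ * I) = ↑(2 * Real.sin (θ / 2)) * exp (↑((θ - π) / 2) * I) := by
  set z := exp (↑(θ / 2) * I)
  set w := exp (-↑(θ / 2) * I)
  have hsq : exp (θ * I) = z ^ 2 := by
    rw [← Complex.exp_nat_mul]; congr 1; push_cast; ring
  have hrot : exp (↑((θ - π) / 2) * I) = z * -I := by
    rw [← exp_neg_pi_div_two_mul_I, ← Complex.exp_add]; congr 1; push_cast; ring
  have hsin : (Real.sin (θ / 2) : ℂ) = (w - z) * I / 2 := by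
    rw [ofReal_sin, Complex.sin]
  have hwz : w * z = 1 := by rw [← Complex.exp_add, neg_mul, neg_add_cancel, Complex.exp_zero]
  rw [hsq, hrot, ofReal_mul, hsin, ofReal_ofNat]
  linear_combination (-1 : ℂ) * hwz + (w * z - z ^ 2) * I_sq

lemma one_sub_stdAddChar_six (k : ℤ) :
    1 - ψ k = ↑(2 * Real.sin (π * k / 6)) * exp (↑(π * (k - 3) / 6) * I) := by
  rw [stdAddChar_six_intCast, one_sub_exp_mul_I]
  congr 4 <;> ring

lemma one_sub_stdAddChar_six_one : 1 - ψ 1 = exp (↑(-(π / 3)) * I) := by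
  have h := one_sub_stdAddChar_six 1
  rw [show π * ((1 : ℤ) : ℝ) / 6 = π / 6 by push_cast; ring, Real.sin_pi_div_six,
    show π * (((1 : ℤ) : ℝ) - 3) / 6 = -(π / 3) by push_cast; ring] at h
  simpa using h

lemma one_sub_stdAddChar_six_two : 1 - ψ 2 = ↑√3 * exp (↑(-(π / 6)) * I) := by
  have h := one_sub_stdAddChar_six 2
  rw [show π * ((2 : ℤ) : ℝ) / 6 = π / 3 by push_cast; ring, Real.sin_pi_div_three,
    show π * (((2 : ℤ) : ℝ) - 3) / 6 = -(π / 6) by push_cast; ring] at h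
  simpa [mul_div_cancel₀] using h

lemma one_sub_stdAddChar_six_three : 1 - ψ 3 = 2 := by
  have h := one_sub_stdAddChar_six 3
  rw [show π * ((3 : ℤ) : ℝ) / 6 = π / 2 by push_cast; ring, Real.sin_pi_div_two,
    show π * (((3 : ℤ) : ℝ) - 3) / 6 = 0 by push_cast; ring] at h
  simpa using h

lemma one_sub_stdAddChar_six_four : 1 - ψ 4 = ↑√3 * exp (↑(π / 6) * I) := by
  have h := one_sub_stdAddChar_six 4
  rw [show π * ((4 : ℤ) : ℝ) / 6 = π - π / 3 by push_cast; ring, Real.sin_pi_sub,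
    Real.sin_pi_div_three, show π * (((4 : ℤ) : ℝ) - 3) / 6 = π / 6 by push_cast; ring] at h
  simpa [mul_div_cancel₀] using h

lemma one_sub_stdAddChar_six_five : 1 - ψ 5 = exp (↑(π / 3) * I) := by
  have h := one_sub_stdAddChar_six 5
  rw [show π * ((5 : ℤ) : ℝ) / 6 = π - π / 6 by push_cast; ring, Real.sin_pi_sub,
    Real.sin_pi_div_six, show π * (((5 : ℤ) : ℝ) - 3) / 6 = π / 3 by push_cast; ring] at h
  simpa using h

lemma add_conj_eq_of_eq_ofReal_mul_exp {z : ℂ} {r θ : ℝ} (hz : z = ↑r * exp (↑θ * I)) :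
    z + conj z = ↑(2 * r * Real.cos θ) := by
  rw [add_conj, hz, re_ofReal_mul, exp_ofReal_mul_I_re]
  push_cast
  ring

@[to_additive]
lemma ZMod.prod_univ_six {M : Type*} [CommMonoid M] (f : ZMod 6 → M) :
    ∏ b, f b = f 0 * f 1 * f 2 * f 3 * f 4 * f 5 :=
  Fin.prod_univ_six f

noncomputable def fourierTerm (ω : ZMod 6 → ℕ) (j : ℕ) (t : ZMod 6) : ℂ :=
  ψ (-(t * j)) * ∏ b, (1 - ψ (t * b)) ^ ω b

section fourierTerm

variable (ω : ZMod 6 → ℕ) (j : ℕ)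

lemma fourierTerm_neg (t : ZMod 6) : fourierTerm ω j (-t) = conj (fourierTerm ω j t) := by
  simp only [fourierTerm, map_mul, map_prod, map_pow, map_sub, map_one, neg_mul,
    ← AddChar.map_neg_eq_conj]

variable {ω}

lemma fourierTerm_zero (hω : ∃ b, ω b ≠ 0) : fourierTerm ω j 0 = 0 := by
  obtain ⟨b, hb⟩ := hω
  refine mul_eq_zero_of_right _ (prod_eq_zero (mem_univ b) ?_)
  simp [zero_pow hb]

lemma fourierTerm_one (h0 : ω 0 = 0) :
    fourierTerm ω j 1 = ↑(2 ^ ω 3 * √3 ^ (ω 2 + ω 4)) *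
      exp (↑(π / 6 * ((2 * ω 5 - 2 * ω 1 + ω 4 - ω 2 - 2 * j : ℤ) : ℝ)) * I) := by
  have hj : -((1 : ZMod 6) * j) = ((-j : ℤ) : ZMod 6) := by push_cast; ring
  have hexp : exp (↑(π / 6 * ((2 * ω 5 - 2 * ω 1 + ω 4 - ω 2 - 2 * j : ℤ) : ℝ)) * I) =
      exp (↑(π * (-j : ℤ) / 3) * I) * exp (↑(-(π / 3)) * I) ^ ω 1 *
        exp (↑(-(π / 6)) * I) ^ ω 2 * exp (↑(π / 6) * I) ^ ω 4 * exp (↑(π / 3) * I) ^ ω 5 := by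
    simp only [← Complex.exp_nat_mul, ← Complex.exp_add]
    congr 1
    push_cast
    ring
  rw [fourierTerm, ZMod.prod_univ_six, hj, stdAddChar_six_intCast, hexp]
  simp only [one_mul, mul_zero, h0, pow_zero, one_sub_stdAddChar_six_one,
    one_sub_stdAddChar_six_two, one_sub_stdAddChar_six_three, one_sub_stdAddChar_six_four,
    one_sub_stdAddChar_six_five, mul_pow]
  push_cast
  ring

lemma fourierTerm_two (h0 : ω 0 = 0) :
    fourierTerm ω j 2 = ↑((if ω 3 = 0 then 1 else 0) * √3 ^ (ω 1 + ω 2 + ω 3 + ω 4 + ω 5)) *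
      exp (↑(π / 6 * ((ω 2 + ω 5 - ω 1 - ω 4 - 4 * j : ℤ) : ℝ)) * I) := by
  have hj : -((2 : ZMod 6) * j) = ((-(2 * j) : ℤ) : ZMod 6) := by push_cast; ring
  have hexp : exp (↑(π / 6 * ((ω 2 + ω 5 - ω 1 - ω 4 - 4 * j : ℤ) : ℝ)) * I) =
      exp (↑(π * (-(2 * j) : ℤ) / 3) * I) * exp (↑(-(π / 6)) * I) ^ ω 1 *
        exp (↑(π / 6) * I) ^ ω 2 * exp (↑(-(π / 6)) * I) ^ ω 4 * exp (↑(π / 6) * I) ^ ω 5 := by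
    simp only [← Complex.exp_nat_mul, ← Complex.exp_add]
    congr 1
    push_cast
    ring
  rw [fourierTerm, ZMod.prod_univ_six, hj, stdAddChar_six_intCast, hexp]
  simp only [show (2 : ZMod 6) * 3 = 0 from rfl, show (2 : ZMod 6) * 4 = 2 from rfl,
    show (2 : ZMod 6) * 5 = 4 from rfl, show (2 : ZMod 6) * 2 = 4 from rfl, mul_one, mul_zero,
    h0, pow_zero, AddChar.map_zero_eq_one, sub_self, one_sub_stdAddChar_six_two,
    one_sub_stdAddChar_six_four, mul_pow]
  rcases eq_or_ne (ω 3) 0 with h3 | h3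
  · simp only [h3, if_true, pow_zero, add_zero]
    push_cast
    ring
  · simp [h3]

lemma fourierTerm_three (h0 : ω 0 = 0) :
    fourierTerm ω j 3 =
      ↑((if ω 2 + ω 4 = 0 then 1 else 0) * (-1) ^ j * (2 : ℝ) ^ (ω 1 + ω 2 + ω 3 + ω 4 + ω 5)) := by
  have hj : -((3 : ZMod 6) * j) = j • 3 := by
    have h6 : (6 : ZMod 6) = 0 := rfl
    rw [nsmul_eq_mul]
    linear_combination (-(j : ZMod 6)) * h6
  have hψ3 : ψ 3 = -1 := by linear_combination -one_sub_stdAddChar_six_three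
  rw [fourierTerm, ZMod.prod_univ_six, hj, AddChar.map_nsmul_eq_pow, hψ3]
  simp only [show (3 : ZMod 6) * 2 = 0 from rfl, show (3 : ZMod 6) * 4 = 0 from rfl,
    show (3 : ZMod 6) * 5 = 3 from rfl, show (3 : ZMod 6) * 3 = 3 from rfl, mul_one, mul_zero,
    h0, pow_zero, AddChar.map_zero_eq_one, sub_self, one_sub_stdAddChar_six_three]
  rcases eq_or_ne (ω 2 + ω 4) 0 with h24 | h24
  · obtain ⟨h2, h4⟩ : ω 2 = 0 ∧ ω 4 = 0 := by omega
    simp only [h2, h4, if_true, pow_zero, add_zero]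
    push_cast
    ring
  · have h0024 : (0 : ℂ) ^ ω 2 * 0 ^ ω 4 = 0 := by rw [← pow_add, zero_pow h24]
    simp only [h24, if_false, zero_mul, ofReal_zero]
    linear_combination (-1) ^ j * 2 ^ ω 1 * 2 ^ ω 3 * 2 ^ ω 5 * h0024

lemma sum_fourierTerm (h0 : ω 0 = 0) (hω : ∃ b, ω b ≠ 0) :
    ∑ t, fourierTerm ω j t = 6 * ↑(
      (2 : ℝ) ^ ω 3 / 3 * √3 ^ (ω 2 + ω 4) *
        Real.cos (π / 6 * ((2 * ω 5 - 2 * ω 1 + ω 4 - ω 2 - 2 * j : ℤ) : ℝ)) +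
      (if ω 3 = 0 then 1 else 0) * √3 ^ (ω 1 + ω 2 + ω 3 + ω 4 + ω 5) / 3 *
        Real.cos (π / 6 * ((ω 2 + ω 5 - ω 1 - ω 4 - 4 * j : ℤ) : ℝ)) +
      (if ω 2 + ω 4 = 0 then 1 else 0) * ((-1 : ℝ) ^ j / 6) *
        2 ^ (ω 1 + ω 2 + ω 3 + ω 4 + ω 5)) := by
  have h4 : fourierTerm ω j 4 = conj (fourierTerm ω j 2) := fourierTerm_neg ω j 2
  have h5 : fourierTerm ω j 5 = conj (fourierTerm ω j 1) := fourierTerm_neg ω j 1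
  have e1 := add_conj_eq_of_eq_ofReal_mul_exp (fourierTerm_one j h0)
  have e2 := add_conj_eq_of_eq_ofReal_mul_exp (fourierTerm_two j h0)
  rw [ZMod.sum_univ_six, h4, h5, fourierTerm_zero j hω, fourierTerm_three j h0]
  linear_combination (norm := skip) e1 + e2
  push_cast
  ring

end fourierTerm

end

theorem T_formula_general
    (ℓ : ℕ → ZMod 6)
    -- ℓ is completely additive on integers not divisible by 31
    (hadd : ∀ a b : ℕ, ¬ 31 ∣ a → ¬ 31 ∣ b → ℓ (a * b) = ℓ a + ℓ b)
    (m : ℕ) (hm1 : m ≠ 1) (hmodd : Odd m) (hm31 : ¬ 31 ∣ m)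
    (hP0 : ∀ p ∈ m.primeFactors, ℓ p ≠ 0)
    (j : ℕ)
    (ω₁ ω₂ ω₃ ω₄ ω₅ W : ℕ)
    (h1 : ω₁ = omegaL ℓ m 1) (h2 : ω₂ = omegaL ℓ m 2) (h3 : ω₃ = omegaL ℓ m 3)
    (h4 : ω₄ = omegaL ℓ m 4) (h5 : ω₅ = omegaL ℓ m 5)
    (hW : W = ω₁ + ω₂ + ω₃ + ω₄ + ω₅)
    (T : ℤ)
    (hT : T = ∑ d ∈ ((rad m).divisors.filter fun d => ℓ d = (j : ZMod 6)), moebius d) :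
    (T : ℝ) =
      (2 : ℝ) ^ ω₃ / 3 * (Real.sqrt 3) ^ (ω₂ + ω₄) *
        Real.cos (Real.pi / 6 * ((2 * ω₅ - 2 * ω₁ + ω₄ - ω₂ - 2 * j : ℤ) : ℝ)) +
      (if ω₃ = 0 then 1 else 0) * (Real.sqrt 3) ^ W / 3 *
        Real.cos (Real.pi / 6 * ((ω₂ + ω₅ - ω₁ - ω₄ - 4 * j : ℤ) : ℝ)) +
      (if ω₂ + ω₄ = 0 then 1 else 0) * ((-1 : ℝ) ^ j / 6) * 2 ^ W := by
  have hprime : ∀ p ∈ m.primeFactors, p.Prime := fun _ => Nat.prime_of_mem_primeFactors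
  have hnot31 : ∀ p ∈ m.primeFactors, ¬ 31 ∣ p :=
    fun p hp h31 => hm31 (h31.trans (Nat.dvd_of_mem_primeFactors hp))
  have hsubsets : T = ∑ S ∈ m.primeFactors.powerset with ∑ p ∈ S, ℓ p = j, (-1 : ℤ) ^ #S := by
    rw [hT, sum_filter, rad, Nat.sum_divisors_prod_primes hprime, sum_filter]
    refine sum_congr rfl fun S hS => ?_
    have hSP := mem_powerset.mp hS
    rw [moebius_prod_primes fun p hp => hprime p (hSP hp),
      map_prod_eq_sum_of_not_dvd (by norm_num) hadd fun p hp => hnot31 p (hSP hp)]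
  have hfourier : 6 * (T : ℂ) =
      ∑ t, fourierTerm (fun b => #{p ∈ m.primeFactors | ℓ p = b}) j t := by
    have horth := card_mul_sum_powerset_filter_sum_eq (ZMod.isPrimitive_stdAddChar 6)
      m.primeFactors ℓ (j : ZMod 6)
    rw [ZMod.card, Nat.cast_ofNat] at horth
    rw [hsubsets]
    push_cast
    rw [horth]
    refine sum_congr rfl fun t _ => ?_
    rw [fourierTerm, ← prod_fiberwise' m.primeFactors ℓ fun b => 1 - ZMod.stdAddChar (t * b)]
    simp only [prod_const]
  have h0 : #{p ∈ m.primeFactors | ℓ p = 0} = 0 := card_eq_zero.mpr (filter_eq_empty_iff.mpr hP0)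
  have hω : ∃ b : ZMod 6, #{p ∈ m.primeFactors | ℓ p = b} ≠ 0 := by
    have hm : 1 < m := by obtain ⟨k, rfl⟩ := hmodd; omega
    obtain ⟨p, hp⟩ := Nat.nonempty_primeFactors.mpr hm
    exact ⟨ℓ p, card_ne_zero.mpr ⟨p, mem_filter.mpr ⟨hp, rfl⟩⟩⟩
  rw [sum_fourierTerm j h0 hω, mul_right_inj' (by norm_num : (6 : ℂ) ≠ 0)] at hfourier
  simp only [omegaL, Nat.cast_one, Nat.cast_ofNat] at h1 h2 h3 h4 h5
  subst h1 h2 h3 h4 h5 hW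
  exact_mod_cast hfourier

theorem T_formula
    (ℓ : ℕ → ZMod 6)
    -- ℓ is determined on odd primes ≠ 31 by the orbit under multiplication by 2 mod 31
    (hℓ : ∀ p : ℕ, p.Prime → p ≠ 2 → p ≠ 31 →
      ∀ j : ℕ, j < 6 → (ℓ p = (j : ZMod 6) ↔ ∃ k : ℕ, k ≤ 4 ∧ (p : ZMod 31) = 2 ^ k * 3 ^ j))
    -- ℓ is completely additive on integers not divisible by 31
    (hadd : ∀ a b : ℕ, ¬ 31 ∣ a → ¬ 31 ∣ b → ℓ (a * b) = ℓ a + ℓ b)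
    (m : ℕ) (hm1 : m ≠ 1) (hmodd : Odd m) (hm31 : ¬ 31 ∣ m)
    (hP0 : ∀ p ∈ m.primeFactors, ℓ p ≠ 0)
    (j : ℕ) (hj : j < 6)
    (ω₁ ω₂ ω₃ ω₄ ω₅ W : ℕ)
    (h1 : ω₁ = omegaL ℓ m 1) (h2 : ω₂ = omegaL ℓ m 2) (h3 : ω₃ = omegaL ℓ m 3)
    (h4 : ω₄ = omegaL ℓ m 4) (h5 : ω₅ = omegaL ℓ m 5)
    (hW : W = ω₁ + ω₂ + ω₃ + ω₄ + ω₅)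
    (T : ℤ)
    (hT : T = ∑ d ∈ ((rad m).divisors.filter fun d => ℓ d = (j : ZMod 6)), moebius d) :
    (T : ℝ) =
      (2 : ℝ) ^ ω₃ / 3 * (Real.sqrt 3) ^ (ω₂ + ω₄) *
        Real.cos (Real.pi / 6 * ((2 * ω₅ - 2 * ω₁ + ω₄ - ω₂ - 2 * j : ℤ) : ℝ)) +
      (if ω₃ = 0 then 1 else 0) * (Real.sqrt 3) ^ W / 3 *
        Real.cos (Real.pi / 6 * ((ω₂ + ω₅ - ω₁ - ω₄ - 4 * j : ℤ) : ℝ)) +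
      (if ω₂ + ω₄ = 0 then 1 else 0) * ((-1 : ℝ) ^ j / 6) * 2 ^ W :=
  T_formula_general ℓ hadd m hm1 hmodd hm31 hP0 j ω₁ ω₂ ω₃ ω₄ ω₅ W h1 h2 h3 h4 h5 hW T hT
end
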